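/- arXiv:1605.02640 — 2 statements merged into one kernel-verified Lean document; each statement's English description precedes it below -/
import Mathlib

section
/- Let ρ be a density matrix on ℂᵈ, and let F_m be finitely many d×d matrices with Σ_m F_m†F_m = I. Let 𝒜 be a set of Hermitian matrices closed under unitary conjugation, C(ρ) = sup_{T∈𝒜} Tr(ρT), and ℰ = {m : F_m ρ F_m† ≠ 0}. Then C(ρ) ≤ max_{m∈ℰ} C(F_m ρ F_m† / Tr(F_m†F_m ρ)). -/
/-!
Put `A_m = F_m √ρ`. Then `ρ = Σ A_mᴴ A_m`, and `A_mᴴ A_m` is unitarily conjugate to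
`A_m A_mᴴ = F_m ρ F_mᴴ`, both being Hermitian with the same characteristic polynomial. Hence
`ρ = Σ p_m U_mᴴ ρ_m U_m` with `p_m = Tr(F_m ρ F_mᴴ) ≥ 0` and `Σ p_m = Tr ρ = 1`. Since `C` is a
supremum of linear functionals over a unitarily invariant set, it is convex and unitarily invariant,
so `C ρ ≤ Σ p_m C(ρ_m)`, and this average is at most `C(ρ_m)` for some `m` with `p_m ≠ 0`.
-/

open ComplexOrder Matrix

namespace Matrix

variable {𝕜 n ι : Type*} [RCLike 𝕜] [Fintype n]

lemma PosSemidef.ofReal_re_trace {A : Matrix n n ℂ} (hA : A.PosSemidef) :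
    ((A.trace.re : ℝ) : ℂ) = A.trace :=
  Complex.ext rfl (Complex.nonneg_iff.1 hA.trace_nonneg).2

lemma PosSemidef.trace_smul_inv_trace_smul {A : Matrix n n 𝕜} (hA : A.PosSemidef) :
    A.trace • (A.trace⁻¹ • A) = A := by
  by_cases h : A.trace = 0
  · simp [hA.trace_eq_zero_iff.1 h]
  · exact smul_inv_smul₀ h A

variable [DecidableEq n]

lemma IsHermitian.exists_unitary_conj_eq_of_charpoly_eq {A B : Matrix n n 𝕜}
    (hA : A.IsHermitian) (hB : B.IsHermitian) (h : A.charpoly = B.charpoly) :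
    ∃ U ∈ unitaryGroup n 𝕜, B = star U * A * U := by
  have hdiagA := hA.conjStarAlgAut_star_eigenvectorUnitary
  have hB' := hB.spectral_theorem
  rw [(hA.eigenvalues_eq_eigenvalues_iff hB).2 h, Unitary.conjStarAlgAut_star_apply] at hdiagA
  rw [Unitary.conjStarAlgAut_apply, ← hdiagA] at hB'
  refine ⟨(hA.eigenvectorUnitary * star hB.eigenvectorUnitary : unitaryGroup n 𝕜), Subtype.prop _,
    hB'.trans ?_⟩
  simp only [mul_assoc, Submonoid.coe_mul, Unitary.coe_star, star_mul, star_star]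

lemma exists_unitary_conjTranspose_mul_self_eq (A : Matrix n n 𝕜) :
    ∃ U ∈ unitaryGroup n 𝕜, Aᴴ * A = star U * (A * Aᴴ) * U :=
  (isHermitian_mul_conjTranspose_self A).exists_unitary_conj_eq_of_charpoly_eq
    (isHermitian_conjTranspose_mul_self A) (charpoly_mul_comm _ _)

open scoped MatrixOrder in
lemma PosSemidef.exists_unitary_sum_conj_eq [Fintype ι] {ρ : Matrix n n 𝕜} (hρ : ρ.PosSemidef)
    {F : ι → Matrix n n 𝕜} (hF : ∑ m, (F m)ᴴ * F m = 1) :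
    ∃ V : ι → Matrix n n 𝕜, (∀ m, V m ∈ unitaryGroup n 𝕜) ∧
      ρ = ∑ m, star (V m) * (F m * ρ * (F m)ᴴ) * V m := by
  set R := CFC.sqrt ρ
  have hRH : Rᴴ = R := (CFC.sqrt_nonneg ρ).posSemidef.1
  have hRR : R * R = ρ := CFC.sqrt_mul_sqrt_self ρ hρ.nonneg
  choose V hV hVconj using fun m => exists_unitary_conjTranspose_mul_self_eq (F m * R)
  refine ⟨V, hV, ?_⟩
  calc ρ = ∑ m, (F m * R)ᴴ * (F m * R) := by
        simp only [conjTranspose_mul, hRH, mul_assoc, ← Finset.mul_sum]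
        simp only [← mul_assoc, ← Finset.sum_mul, hF, mul_one, hRR]
    _ = _ := by
        refine Finset.sum_congr rfl fun m _ => ?_
        rw [hVconj, conjTranspose_mul, hRH, ← hRR]
        simp only [mul_assoc]

end Matrix

lemma Finset.exists_ne_zero_sum_mul_le {ι : Type*} [Fintype ι] {w : ι → ℝ} (hw₀ : ∀ i, 0 ≤ w i)
    (hw₁ : ∑ i, w i = 1) (s : ι → ℝ) : ∃ i, w i ≠ 0 ∧ ∑ j, w j * s j ≤ s i := by
  set c := ∑ j, w j * s j
  obtain ⟨i, hi, hle⟩ : ∃ i ∈ univ.filter (fun i => w i ≠ 0), w i * c ≤ w i * s i := by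
    have hsum : ∑ i with w i ≠ 0, w i = 1 := by rwa [sum_filter_ne_zero]
    refine exists_le_of_sum_le (nonempty_of_sum_ne_zero (hsum ▸ one_ne_zero)) ?_
    rw [← sum_mul, hsum, one_mul, sum_filter_of_ne fun i _ h => left_ne_zero_of_mul h]
  rw [mem_filter] at hi
  exact ⟨i, hi.2, le_of_mul_le_mul_left hle ((hw₀ i).lt_of_ne' hi.2)⟩

section traceSup

variable {n ι : Type*} [Fintype n] {𝒜 : Set (Matrix n n ℂ)}

noncomputable def traceSup (𝒜 : Set (Matrix n n ℂ)) (σ : Matrix n n ℂ) : ℝ :=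
  sSup {x : ℝ | ∃ T ∈ 𝒜, x = ((σ * T).trace).re}

lemma re_trace_mul_le_traceSup (h𝒜 : IsCompact 𝒜) (σ : Matrix n n ℂ) {T : Matrix n n ℂ}
    (hT : T ∈ 𝒜) : ((σ * T).trace).re ≤ traceSup 𝒜 σ := by
  refine le_csSup ?_ ⟨T, hT, rfl⟩
  have hcont : Continuous fun T : Matrix n n ℂ => ((σ * T).trace).re := by fun_prop
  simpa [Set.image, eq_comm] using (h𝒜.image hcont).bddAbove

lemma traceSup_le (h𝒜 : 𝒜.Nonempty) {σ : Matrix n n ℂ} {c : ℝ}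
    (h : ∀ T ∈ 𝒜, ((σ * T).trace).re ≤ c) : traceSup 𝒜 σ ≤ c := by
  obtain ⟨T₀, hT₀⟩ := h𝒜
  exact csSup_le ⟨_, T₀, hT₀, rfl⟩ fun x ⟨T, hT, hx⟩ => hx ▸ h T hT

variable [DecidableEq n]

lemma re_trace_conj_mul_le_traceSup (h𝒜c : IsCompact 𝒜)
    (h𝒜u : ∀ T ∈ 𝒜, ∀ U ∈ unitaryGroup n ℂ, Uᴴ * T * U ∈ 𝒜) (σ : Matrix n n ℂ)
    {V : Matrix n n ℂ} (hV : V ∈ unitaryGroup n ℂ) {T : Matrix n n ℂ} (hT : T ∈ 𝒜) :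
    ((star V * σ * V * T).trace).re ≤ traceSup 𝒜 σ := by
  have hconj : V * T * star V ∈ 𝒜 := by
    simpa [star_eq_conjTranspose] using h𝒜u T hT (star V) (Unitary.star_mem hV)
  have htrace : (star V * σ * V * T).trace = (σ * (V * T * star V)).trace := by
    rw [mul_assoc, mul_assoc, trace_mul_comm]
    simp only [mul_assoc]
  rw [htrace]
  exact re_trace_mul_le_traceSup h𝒜c σ hconj

lemma traceSup_sum_smul_conj_le [Fintype ι] (h𝒜ne : 𝒜.Nonempty) (h𝒜c : IsCompact 𝒜)
    (h𝒜u : ∀ T ∈ 𝒜, ∀ U ∈ unitaryGroup n ℂ, Uᴴ * T * U ∈ 𝒜) {w : ι → ℝ} (hw : ∀ m, 0 ≤ w m)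
    {V : ι → Matrix n n ℂ} (hV : ∀ m, V m ∈ unitaryGroup n ℂ) (σ : ι → Matrix n n ℂ) :
    traceSup 𝒜 (∑ m, (w m : ℂ) • (star (V m) * σ m * V m)) ≤ ∑ m, w m * traceSup 𝒜 (σ m) := by
  refine traceSup_le h𝒜ne fun T hT => ?_
  simp only [Finset.sum_mul, trace_sum, Complex.re_sum, smul_mul_assoc, trace_smul, smul_eq_mul,
    Complex.re_ofReal_mul]
  exact Finset.sum_le_sum fun m _ =>
    mul_le_mul_of_nonneg_left (re_trace_conj_mul_le_traceSup h𝒜c h𝒜u (σ m) (hV m) hT) (hw m)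

end traceSup

open Matrix in
theorem stmt8_general {d n : ℕ} (𝒜 : Set (Matrix (Fin d) (Fin d) ℂ))
    (h𝒜ne : 𝒜.Nonempty) (h𝒜c : IsCompact 𝒜)
    (h𝒜u : ∀ T ∈ 𝒜, ∀ U ∈ Matrix.unitaryGroup (Fin d) ℂ,
      (U : Matrix (Fin d) (Fin d) ℂ)ᴴ * T * (U : Matrix (Fin d) (Fin d) ℂ) ∈ 𝒜)
    (C : Matrix (Fin d) (Fin d) ℂ → ℝ)
    (hC : ∀ ρ, C ρ = sSup {x : ℝ | ∃ T ∈ 𝒜, x = ((ρ * T).trace).re})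
    (ρ : Matrix (Fin d) (Fin d) ℂ) (hρ : ρ.PosSemidef) (hρ1 : ρ.trace = 1)
    (F : Fin n → Matrix (Fin d) (Fin d) ℂ)
    (hF : ∑ m, (F m)ᴴ * F m = 1) :
    ∃ m, F m * ρ * (F m)ᴴ ≠ 0 ∧
      C ρ ≤ C ((((F m)ᴴ * F m * ρ).trace)⁻¹ • (F m * ρ * (F m)ᴴ)) := by
  obtain rfl : C = traceSup 𝒜 := funext hC
  obtain ⟨V, hV, hρV⟩ := hρ.exists_unitary_sum_conj_eq hF
  set X := fun m => F m * ρ * (F m)ᴴ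
  have hX (m : Fin n) : (X m).PosSemidef := hρ.mul_mul_conjTranspose_same (F m)
  have htrace (m : Fin n) : ((F m)ᴴ * F m * ρ).trace = (X m).trace := (trace_mul_cycle _ _ _).symm
  set w := fun m => (X m).trace.re
  have hw_coe (m : Fin n) : (w m : ℂ) = (X m).trace := (hX m).ofReal_re_trace
  have hw₁ : ∑ m, w m = 1 := by
    rw [← Complex.ofReal_inj, Complex.ofReal_sum, Complex.ofReal_one]
    simp_rw [hw_coe, ← htrace, ← trace_sum, ← Finset.sum_mul, hF, one_mul, hρ1]
  have hρσ : ρ = ∑ m, (w m : ℂ) • (star (V m) * ((X m).trace⁻¹ • X m) * V m) := by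
    refine hρV.trans (Finset.sum_congr rfl fun m _ => ?_)
    rw [hw_coe, ← smul_mul_assoc, ← mul_smul_comm, (hX m).trace_smul_inv_trace_smul]
  have hw₀ (m : Fin n) : 0 ≤ w m := (Complex.nonneg_iff.1 (hX m).trace_nonneg).1
  obtain ⟨m, hm, hle⟩ := Finset.exists_ne_zero_sum_mul_le hw₀ hw₁
    fun m => traceSup 𝒜 ((X m).trace⁻¹ • X m)
  refine ⟨m, fun h => hm (by simp only [w, X, h, trace_zero, Complex.zero_re]), ?_⟩
  rw [htrace]
  calc traceSup 𝒜 ρ ≤ ∑ m, w m * traceSup 𝒜 ((X m).trace⁻¹ • X m) :=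
        hρσ ▸ traceSup_sum_smul_conj_le h𝒜ne h𝒜c h𝒜u hw₀ hV _
    _ ≤ _ := hle

open Matrix in
/-- For a POVM-type family `F_m` with `Σ F_m†F_m = I`, at least one of the
post-measurement states gives a value of `C` at least `C(ρ)`. -/
theorem stmt8 {d n : ℕ} (𝒜 : Set (Matrix (Fin d) (Fin d) ℂ))
    (h𝒜ne : 𝒜.Nonempty) (h𝒜c : IsCompact 𝒜)
    (h𝒜h : ∀ T ∈ 𝒜, T.IsHermitian)
    (h𝒜u : ∀ T ∈ 𝒜, ∀ U ∈ Matrix.unitaryGroup (Fin d) ℂ,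
      (U : Matrix (Fin d) (Fin d) ℂ)ᴴ * T * (U : Matrix (Fin d) (Fin d) ℂ) ∈ 𝒜)
    (C : Matrix (Fin d) (Fin d) ℂ → ℝ)
    (hC : ∀ ρ, C ρ = sSup {x : ℝ | ∃ T ∈ 𝒜, x = ((ρ * T).trace).re})
    (ρ : Matrix (Fin d) (Fin d) ℂ) (hρ : ρ.PosSemidef) (hρ1 : ρ.trace = 1)
    (F : Fin n → Matrix (Fin d) (Fin d) ℂ)
    (hF : ∑ m, (F m)ᴴ * F m = 1) :
    ∃ m, F m * ρ * (F m)ᴴ ≠ 0 ∧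
      C ρ ≤ C ((((F m)ᴴ * F m * ρ).trace)⁻¹ • (F m * ρ * (F m)ᴴ)) :=
  stmt8_general 𝒜 h𝒜ne h𝒜c h𝒜u C hC ρ hρ hρ1 F hF
end

section
/- Let ρ be a density matrix on ℂᵈ and Π_m finitely many orthogonal projections with Σ_m Π_m = I_d. Then ρ majorizes ρ' = Σ_m Π_m ρ Π_m (the pinched state), i.e., the decreasing spectrum of ρ majorizes that of ρ'. -/
/-!
Pinching `A ↦ ∑ₖ Pₖ A Pₖ` is positive, unital, trace preserving and self-adjoint for the trace
pairing. Let `Q` be the projection onto the eigenvectors of `ρ'` carrying the eigenvalues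
`l' 0, …, l' (j-1)`. Then `X := ∑ₖ Pₖ Q Pₖ` satisfies `0 ≤ X ≤ 1`, `tr X = j` and
`tr (X ρ) = tr (Q ρ') = l' 0 + ⋯ + l' (j-1)`. Ky Fan's bound `tr (X ρ) ≤ l 0 + ⋯ + l (j-1)` for
such `X` comes from writing `X` in an eigenbasis of `ρ`: its diagonal entries `tᵢ ∈ [0, 1]` sum
to `j`, and among such weights `∑ tᵢ λᵢ` is largest when all weight sits on the `j` largest
eigenvalues. Equality at `j = d` is trace preservation.
-/

open ComplexOrder

/-- Partial sum of the first `j` components of a vector. -/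
def psum {d : ℕ} (a : Fin d → ℝ) (j : ℕ) : ℝ :=
  ∑ i ∈ Finset.univ.filter (fun i : Fin d => (i : ℕ) < j), a i

theorem Fin.sum_boole_val_lt {d j : ℕ} (hj : j ≤ d) :
    ∑ i : Fin d, (if (i : ℕ) < j then (1 : ℝ) else 0) = j := by
  rw [Finset.sum_boole, Fin.card_filter_val_lt, min_eq_right hj]

theorem psum_eq_sum_ite {d : ℕ} (a : Fin d → ℝ) (j : ℕ) :
    psum a j = ∑ i : Fin d, if (i : ℕ) < j then a i else 0 := by
  rw [psum, Finset.sum_filter]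

theorem psum_self {d : ℕ} (a : Fin d → ℝ) : psum a d = ∑ i, a i := by
  rw [psum, Finset.filter_true_of_mem fun i _ => i.2]

theorem psum_comp_perm {d : ℕ} (a : Fin d → ℝ) (σ : Equiv.Perm (Fin d)) (j : ℕ) :
    psum (a ∘ σ) j = ∑ i ∈ ({i | (i : ℕ) < j} : Finset (Fin d)).map σ.toEmbedding, a i := by
  rw [psum, Finset.sum_map]; rfl

theorem sum_mul_le_psum_of_antitone {d : ℕ} {l s : Fin d → ℝ} (hl : Antitone l)
    (hs0 : ∀ i, 0 ≤ s i) (hs1 : ∀ i, s i ≤ 1) {j : ℕ} (hj : j ≤ d) (hsum : ∑ i, s i = j) :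
    ∑ i, l i * s i ≤ psum l j := by
  -- `c` separates the first `j` entries of `l` from the others (if `j = d`, any lower bound works)
  set c : ℝ := if h : j < d then l ⟨j, h⟩ else ⨅ i, l i
  have hterm : ∀ i : Fin d, (l i - c) * (s i - if (i : ℕ) < j then 1 else 0) ≤ 0 := by
    intro i
    by_cases hij : (i : ℕ) < j
    · have : c ≤ l i := by
        by_cases h : j < d
        · simpa [c, h] using hl (show i ≤ ⟨j, h⟩ from Fin.le_def.mpr hij.le)
        · simpa [c, h] using ciInf_le (Finite.bddBelow_range l) i
      simp only [hij, if_true]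
      exact mul_nonpos_of_nonneg_of_nonpos (by linarith) (by linarith [hs1 i])
    · have h : j < d := by omega
      have : l i ≤ c := by
        simpa [c, h] using hl (show (⟨j, h⟩ : Fin d) ≤ i from Fin.le_def.mpr (not_lt.mp hij))
      simp only [hij, if_false, sub_zero]
      exact mul_nonpos_of_nonpos_of_nonneg (by linarith) (hs0 i)
  have hexpand : ∑ i, (l i - c) * (s i - if (i : ℕ) < j then 1 else 0) =
      ∑ i, l i * s i - psum l j := by
    have h : ∀ i : Fin d, (l i - c) * (s i - if (i : ℕ) < j then 1 else 0) =
        l i * s i - (if (i : ℕ) < j then l i else 0) -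
          c * (s i - if (i : ℕ) < j then 1 else 0) := by
      intro i; split_ifs <;> ring
    rw [Finset.sum_congr rfl fun i _ => h i, Finset.sum_sub_distrib, Finset.sum_sub_distrib,
      ← Finset.mul_sum, Finset.sum_sub_distrib, hsum, Fin.sum_boole_val_lt hj, ← psum_eq_sum_ite]
    ring
  rw [← sub_nonpos, ← hexpand]
  exact Finset.sum_nonpos fun i _ => hterm i

namespace Matrix

section Pinching

variable {ι κ R : Type*} [Fintype ι] [Fintype κ]

def pinching [NonUnitalNonAssocSemiring R] (P : κ → Matrix ι ι R) (A : Matrix ι ι R) :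
    Matrix ι ι R :=
  ∑ k, P k * A * P k

theorem trace_pinching_mul [CommSemiring R] (P : κ → Matrix ι ι R) (A B : Matrix ι ι R) :
    (pinching P A * B).trace = (A * pinching P B).trace := by
  simp only [pinching, Finset.sum_mul, Finset.mul_sum, trace_sum]
  refine Finset.sum_congr rfl fun k _ => ?_
  rw [mul_assoc (P k), mul_assoc (P k), trace_mul_comm (P k)]
  simp only [mul_assoc]

theorem pinching_one [DecidableEq ι] [Semiring R] {P : κ → Matrix ι ι R}
    (hPp : ∀ k, P k * P k = P k) (hP1 : ∑ k, P k = 1) : pinching P 1 = 1 := by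
  simp only [pinching, mul_one, hPp, hP1]

theorem trace_pinching [DecidableEq ι] [CommSemiring R] {P : κ → Matrix ι ι R}
    (hPp : ∀ k, P k * P k = P k) (hP1 : ∑ k, P k = 1) (A : Matrix ι ι R) :
    (pinching P A).trace = A.trace := by
  rw [← mul_one (pinching P A), trace_pinching_mul, pinching_one hPp hP1, mul_one]

theorem pinching_sub [Ring R] (P : κ → Matrix ι ι R) (A B : Matrix ι ι R) :
    pinching P (A - B) = pinching P A - pinching P B := by
  simp only [pinching, mul_sub, sub_mul, Finset.sum_sub_distrib]

theorem PosSemidef.pinching {𝕜 : Type*} [RCLike 𝕜] {P : κ → Matrix ι ι 𝕜}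
    (hPh : ∀ k, (P k)ᴴ = P k) {A : Matrix ι ι 𝕜} (hA : A.PosSemidef) :
    (pinching P A).PosSemidef := by
  refine Finset.sum_induction _ PosSemidef (fun _ _ => PosSemidef.add) PosSemidef.zero
    fun k _ => ?_
  simpa only [hPh] using hA.conjTranspose_mul_mul_same (P k)

end Pinching

end Matrix

namespace Matrix.IsHermitian

variable {𝕜 : Type*} [RCLike 𝕜]

section EigenProj

variable {n : Type*} [Fintype n] [DecidableEq n] {M : Matrix n n 𝕜} (hM : M.IsHermitian)

local notation "U" => (hM.eigenvectorUnitary : Matrix n n 𝕜)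

theorem trace_mul_eq_sum_mul_eigenvalues (X : Matrix n n 𝕜) :
    (X * M).trace = ∑ i, (star U * X * U) i i * hM.eigenvalues i := by
  conv_lhs => rw [hM.spectral_theorem, Unitary.conjStarAlgAut_apply]
  rw [← mul_assoc, ← mul_assoc, trace_mul_comm, ← mul_assoc, ← mul_assoc]
  simp [trace, mul_diagonal]

noncomputable def eigenProj (S : Finset n) : Matrix n n 𝕜 :=
  U * diagonal (fun i => if i ∈ S then 1 else 0) * star U

theorem star_mul_eigenProj_mul (S : Finset n) :
    star U * hM.eigenProj S * U = diagonal (fun i => if i ∈ S then 1 else 0) := by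
  simp only [eigenProj, ← mul_assoc, Unitary.coe_star_mul_self, one_mul]
  simp only [mul_assoc, Unitary.coe_star_mul_self, mul_one]

theorem posSemidef_eigenProj (S : Finset n) : (hM.eigenProj S).PosSemidef := by
  refine PosSemidef.mul_mul_conjTranspose_same ?_ _
  exact posSemidef_diagonal_iff.mpr fun i => by split_ifs <;> simp

theorem one_sub_eigenProj (S : Finset n) : 1 - hM.eigenProj S = hM.eigenProj Sᶜ := by
  rw [sub_eq_iff_eq_add']
  have h : ∀ i, ((if i ∈ S then 1 else 0) + if i ∈ Sᶜ then 1 else 0 : 𝕜) = 1 := fun i => by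
    by_cases hi : i ∈ S <;> simp [hi]
  rw [eigenProj, eigenProj, ← add_mul, ← mul_add, diagonal_add, funext h, diagonal_one, mul_one,
    Unitary.mul_star_self_of_mem hM.eigenvectorUnitary.2]

theorem trace_eigenProj (S : Finset n) : (hM.eigenProj S).trace = S.card := by
  rw [eigenProj, trace_mul_cycle, Unitary.coe_star_mul_self, one_mul, trace_diagonal]
  simp

theorem trace_eigenProj_mul (S : Finset n) :
    (hM.eigenProj S * M).trace = ∑ i ∈ S, (hM.eigenvalues i : 𝕜) := by
  rw [hM.trace_mul_eq_sum_mul_eigenvalues, star_mul_eigenProj_mul]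
  simp [Finset.sum_ite_mem]

end EigenProj

theorem re_trace_mul_le_psum {d : ℕ}
    {A X : Matrix (Fin d) (Fin d) 𝕜} (hA : A.IsHermitian) (hX : X.PosSemidef)
    (hX1 : (1 - X).PosSemidef) {j : ℕ} (hj : j ≤ d) (htr : X.trace = j) {l : Fin d → ℝ}
    (hl : Antitone l) {σ : Equiv.Perm (Fin d)} (hlσ : l = hA.eigenvalues ∘ σ) :
    RCLike.re (X * A).trace ≤ psum l j := by
  have hUU := Unitary.star_mul_self_of_mem hA.eigenvectorUnitary.2
  have hUU' := Unitary.mul_star_self_of_mem hA.eigenvectorUnitary.2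
  rw [hA.trace_mul_eq_sum_mul_eigenvalues, ← Equiv.sum_comp σ]
  generalize (hA.eigenvectorUnitary : Matrix (Fin d) (Fin d) 𝕜) = U at hUU hUU' ⊢
  have hY : (star U * X * U).PosSemidef := by
    simpa only [star_eq_conjTranspose] using hX.conjTranspose_mul_mul_same U
  have hY1 : (1 - star U * X * U).PosSemidef := by
    have h : star U * (1 - X) * U = 1 - star U * X * U := by rw [mul_sub, mul_one, sub_mul, hUU]
    rw [← h]
    simpa only [star_eq_conjTranspose] using hX1.conjTranspose_mul_mul_same U
  have hYtr : (star U * X * U).trace = j := by rw [trace_mul_cycle, hUU', one_mul, htr]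
  generalize star U * X * U = Y at hY hY1 hYtr
  have hdiag0 : ∀ i, 0 ≤ RCLike.re (Y i i) := fun i => (RCLike.nonneg_iff.mp hY.diag_nonneg).1
  have hdiag1 : ∀ i, RCLike.re (Y i i) ≤ 1 := fun i => by
    simpa using (RCLike.nonneg_iff.mp (hY1.diag_nonneg (i := i))).1
  have hdiagsum : ∑ i, RCLike.re (Y i i) = j := by
    simpa [trace] using congrArg RCLike.re hYtr
  calc RCLike.re (∑ k, Y (σ k) (σ k) * (hA.eigenvalues (σ k) : 𝕜))
      = ∑ k, l k * RCLike.re (Y (σ k) (σ k)) := by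
        simp only [map_sum, RCLike.re_mul_ofReal, hlσ, Function.comp_apply, mul_comm]
    _ ≤ psum l j := sum_mul_le_psum_of_antitone hl (fun k => hdiag0 _) (fun k => hdiag1 _) hj
        (by rw [Equiv.sum_comp σ fun i => RCLike.re (Y i i), hdiagsum])

end Matrix.IsHermitian

open Matrix in
theorem stmt15_general {d n : ℕ} (P : Fin n → Matrix (Fin d) (Fin d) ℂ)
    (hPp : ∀ m, P m * P m = P m) (hPh : ∀ m, (P m)ᴴ = P m)
    (hP1 : ∑ m, P m = 1)
    (ρ : Matrix (Fin d) (Fin d) ℂ) (hρ : ρ.PosSemidef)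
    (hρ' : (∑ m, P m * ρ * P m).IsHermitian)
    (l l' : Fin d → ℝ) (hls : Antitone l)
    (hlp : ∃ σ : Equiv.Perm (Fin d), l = hρ.isHermitian.eigenvalues ∘ σ)
    (hl'p : ∃ σ : Equiv.Perm (Fin d), l' = hρ'.eigenvalues ∘ σ) :
    (∀ j ≤ d, psum l' j ≤ psum l j) ∧ psum l d = psum l' d := by
  obtain ⟨σ, hσ⟩ := hlp
  obtain ⟨σ', rfl⟩ := hl'p
  refine ⟨fun j hj => ?_, ?_⟩
  · set S := ({i | (i : ℕ) < j} : Finset (Fin d)).map σ'.toEmbedding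
    have hS : (S.card : ℂ) = j := by simp [S, Fin.card_filter_val_lt, hj]
    have hX : (pinching P (hρ'.eigenProj S)).PosSemidef :=
      (hρ'.posSemidef_eigenProj S).pinching hPh
    have hX1 : (1 - pinching P (hρ'.eigenProj S)).PosSemidef := by
      rw [← pinching_one hPp hP1, ← pinching_sub, hρ'.one_sub_eigenProj]
      exact (hρ'.posSemidef_eigenProj Sᶜ).pinching hPh
    have htr : (pinching P (hρ'.eigenProj S)).trace = j := by
      rw [trace_pinching hPp hP1, hρ'.trace_eigenProj, hS]
    have hKyFan := hρ.isHermitian.re_trace_mul_le_psum hX hX1 hj htr hls hσ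
    rw [trace_pinching_mul, pinching, hρ'.trace_eigenProj_mul] at hKyFan
    simpa only [map_sum, RCLike.ofReal_re, psum_comp_perm] using hKyFan
  · have htr := trace_pinching hPp hP1 ρ
    rw [pinching, hρ'.trace_eq_sum_eigenvalues, hρ.isHermitian.trace_eq_sum_eigenvalues] at htr
    simp only [hσ, psum_self, Function.comp_apply, Equiv.sum_comp]
    exact_mod_cast htr.symm

open Matrix in
/-- Quantum Hardy–Littlewood–Pólya: a density matrix majorizes its pinching
`Σ_m P_m ρ P_m` by projections summing to the identity. -/
theorem stmt15 {d n : ℕ} (P : Fin n → Matrix (Fin d) (Fin d) ℂ)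
    (hPp : ∀ m, P m * P m = P m) (hPh : ∀ m, (P m)ᴴ = P m)
    (hP1 : ∑ m, P m = 1)
    (ρ : Matrix (Fin d) (Fin d) ℂ) (hρ : ρ.PosSemidef) (hρ1 : ρ.trace = 1)
    (hρ' : (∑ m, P m * ρ * P m).IsHermitian)
    (l l' : Fin d → ℝ) (hls : Antitone l) (hl's : Antitone l')
    (hlp : ∃ σ : Equiv.Perm (Fin d), l = hρ.isHermitian.eigenvalues ∘ σ)
    (hl'p : ∃ σ : Equiv.Perm (Fin d), l' = hρ'.eigenvalues ∘ σ) :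
    (∀ j ≤ d, psum l' j ≤ psum l j) ∧ psum l d = psum l' d :=
  stmt15_general P hPp hPh hP1 ρ hρ hρ' l l' hls hlp hl'p
end
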